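/- The α-Ricci curvature κ_α(x,y) on a directed graph is concave in α: for α_1, α_2, λ ∈ [0,1], with ᾱ = λα_1 + (1−λ)α_2, one has κ_{ᾱ}(x,y) ≥ λ κ_{α_1}(x,y) + (1−λ) κ_{α_2}(x,y). -/

import Mathlib

/-!
The lazy distributions `μ_x^α` depend affinely on `α`, so concavity of `κ_α` is joint convexity
of `W₁`. That holds because `W₁` is subadditive and positively homogeneous in the pair of
marginals: sums and nonnegative multiples of couplings are couplings of the sums and multiples
of the marginals, at the sum and multiple of the costs.
-/

open Finset

variable {V : Type*} [Fintype V] [DecidableEq V]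

/-- `π` is a coupling of `μ` and `ν`. -/
def IsCoupling (μ ν : V → ℝ) (π : V → V → ℝ) : Prop :=
  (∀ x y, 0 ≤ π x y) ∧ (∀ x, ∑ y, π x y = μ x) ∧ (∀ y, ∑ x, π x y = ν y)

/-- The L1-Wasserstein distance with cost `d`. -/
noncomputable def W1 (d : V → V → ℝ) (μ ν : V → ℝ) : ℝ :=
  sInf {c | ∃ π, IsCoupling μ ν π ∧ c = ∑ x, ∑ y, π x y * d x y}

/-- The lazy distribution `μ_x^α`: mass `α` at `x` and `(1−α)·Pb(x,z)` elsewhere. -/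
noncomputable def lazyDist (Pb : V → V → ℝ) (α : ℝ) (x : V) : V → ℝ :=
  fun z => if z = x then α else (1 - α) * Pb x z

/-- The `α`-Ricci curvature `κ_α(x,y) = 1 − W₁(μ_x^α, μ_y^α)/d(x,y)`. -/
noncomputable def kappaAlpha (d : V → V → ℝ) (Pb : V → V → ℝ) (α : ℝ) (x y : V) : ℝ :=
  1 - W1 d (lazyDist Pb α x) (lazyDist Pb α y) / d x y

open scoped Pointwise

namespace IsCoupling

omit [DecidableEq V]

variable {μ ν μ₁ ν₁ μ₂ ν₂ : V → ℝ} {π π₁ π₂ : V → V → ℝ}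

lemma prod (hμ : ∀ a, 0 ≤ μ a) (hν : ∀ b, 0 ≤ ν b) (hμ₁ : ∑ a, μ a = 1)
    (hν₁ : ∑ b, ν b = 1) : IsCoupling μ ν fun a b => μ a * ν b :=
  ⟨fun a b => mul_nonneg (hμ a) (hν b),
    fun a => by rw [← mul_sum, hν₁, mul_one],
    fun b => by rw [← sum_mul, hμ₁, one_mul]⟩

lemma add (h₁ : IsCoupling μ₁ ν₁ π₁) (h₂ : IsCoupling μ₂ ν₂ π₂) :
    IsCoupling (μ₁ + μ₂) (ν₁ + ν₂) (π₁ + π₂) :=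
  ⟨fun a b => add_nonneg (h₁.1 a b) (h₂.1 a b),
    fun a => by simp only [Pi.add_apply, sum_add_distrib, h₁.2.1, h₂.2.1],
    fun b => by simp only [Pi.add_apply, sum_add_distrib, h₁.2.2, h₂.2.2]⟩

lemma smul (h : IsCoupling μ ν π) {t : ℝ} (ht : 0 ≤ t) : IsCoupling (t • μ) (t • ν) (t • π) :=
  ⟨fun a b => mul_nonneg ht (h.1 a b),
    fun a => by simp only [Pi.smul_apply, smul_eq_mul, ← mul_sum, h.2.1],
    fun b => by simp only [Pi.smul_apply, smul_eq_mul, ← mul_sum, h.2.2]⟩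

end IsCoupling

def couplingCosts (d : V → V → ℝ) (μ ν : V → ℝ) : Set ℝ :=
  {c | ∃ π, IsCoupling μ ν π ∧ c = ∑ x, ∑ y, π x y * d x y}

section W1

omit [DecidableEq V]

variable {d : V → V → ℝ} {μ ν μ₁ ν₁ μ₂ ν₂ : V → ℝ} {π π₁ π₂ : V → V → ℝ}

lemma W1_eq_sInf_couplingCosts : W1 d μ ν = sInf (couplingCosts d μ ν) := rfl

lemma IsCoupling.nonempty_couplingCosts (h : IsCoupling μ ν π) :
    (couplingCosts d μ ν).Nonempty :=
  ⟨_, π, h, rfl⟩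

lemma bddBelow_couplingCosts (hd : ∀ a b, 0 ≤ d a b) : BddBelow (couplingCosts d μ ν) := by
  refine ⟨0, ?_⟩
  rintro _ ⟨π, hπ, rfl⟩
  exact sum_nonneg fun a _ => sum_nonneg fun b _ => mul_nonneg (hπ.1 a b) (hd a b)

lemma couplingCosts_add_subset :
    couplingCosts d μ₁ ν₁ + couplingCosts d μ₂ ν₂ ⊆ couplingCosts d (μ₁ + μ₂) (ν₁ + ν₂) := by
  rintro _ ⟨_, ⟨π₁, h₁, rfl⟩, _, ⟨π₂, h₂, rfl⟩, rfl⟩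
  refine ⟨π₁ + π₂, h₁.add h₂, ?_⟩
  simp only [Pi.add_apply, add_mul, sum_add_distrib]

lemma smul_couplingCosts_subset {t : ℝ} (ht : 0 ≤ t) :
    t • couplingCosts d μ ν ⊆ couplingCosts d (t • μ) (t • ν) := by
  rintro _ ⟨_, ⟨π, h, rfl⟩, rfl⟩
  refine ⟨t • π, h.smul ht, ?_⟩
  simp only [Pi.smul_apply, smul_eq_mul, mul_sum, mul_assoc]

lemma W1_add_le (hd : ∀ a b, 0 ≤ d a b) (h₁ : IsCoupling μ₁ ν₁ π₁)
    (h₂ : IsCoupling μ₂ ν₂ π₂) :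
    W1 d (μ₁ + μ₂) (ν₁ + ν₂) ≤ W1 d μ₁ ν₁ + W1 d μ₂ ν₂ := by
  simp only [W1_eq_sInf_couplingCosts]
  rw [← csInf_add h₁.nonempty_couplingCosts (bddBelow_couplingCosts hd)
    h₂.nonempty_couplingCosts (bddBelow_couplingCosts hd)]
  exact csInf_le_csInf (bddBelow_couplingCosts hd)
    (h₁.nonempty_couplingCosts.add h₂.nonempty_couplingCosts) couplingCosts_add_subset

lemma W1_smul_le (hd : ∀ a b, 0 ≤ d a b) (h : IsCoupling μ ν π) {t : ℝ} (ht : 0 ≤ t) :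
    W1 d (t • μ) (t • ν) ≤ t * W1 d μ ν := by
  simp only [W1_eq_sInf_couplingCosts]
  rw [← smul_eq_mul, ← Real.sInf_smul_of_nonneg ht]
  exact csInf_le_csInf (bddBelow_couplingCosts hd) (h.nonempty_couplingCosts.smul_set)
    (smul_couplingCosts_subset ht)

lemma W1_smul_add_smul_le (hd : ∀ a b, 0 ≤ d a b) (h₁ : IsCoupling μ₁ ν₁ π₁)
    (h₂ : IsCoupling μ₂ ν₂ π₂) {s t : ℝ} (hs : 0 ≤ s) (ht : 0 ≤ t) :
    W1 d (s • μ₁ + t • μ₂) (s • ν₁ + t • ν₂) ≤ s * W1 d μ₁ ν₁ + t * W1 d μ₂ ν₂ :=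
  (W1_add_le hd (h₁.smul hs) (h₂.smul ht)).trans
    (add_le_add (W1_smul_le hd h₁ hs) (W1_smul_le hd h₂ ht))

end W1

section lazyDist

variable {Pb : V → V → ℝ}

omit [Fintype V] in
lemma lazyDist_nonneg (hPnn : ∀ x y, 0 ≤ Pb x y) {α : ℝ} (hα : α ∈ Set.Icc (0:ℝ) 1)
    (x z : V) : 0 ≤ lazyDist Pb α x z := by
  unfold lazyDist
  split_ifs
  · exact hα.1
  · exact mul_nonneg (sub_nonneg.2 hα.2) (hPnn x z)

lemma sum_lazyDist (hProw : ∀ x, ∑ y, Pb x y = 1) (hPdiag : ∀ x, Pb x x = 0) (α : ℝ)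
    (x : V) : ∑ z, lazyDist Pb α x z = 1 := by
  have h : ∀ z, lazyDist Pb α x z = (if z = x then α else 0) + (1 - α) * Pb x z := by
    intro z
    unfold lazyDist
    split_ifs with hz
    · simp [hz, hPdiag]
    · simp
  simp only [h, sum_add_distrib, ← mul_sum, hProw, sum_ite_eq', mem_univ, if_true]
  ring

omit [Fintype V] in
lemma lazyDist_convexComb (α₁ α₂ t : ℝ) (x : V) :
    lazyDist Pb (t * α₁ + (1 - t) * α₂) x = t • lazyDist Pb α₁ x + (1 - t) • lazyDist Pb α₂ x := by
  funext z
  simp only [lazyDist, Pi.add_apply, Pi.smul_apply, smul_eq_mul]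
  split_ifs <;> ring

lemma isCoupling_lazyDist_prod (hPnn : ∀ x y, 0 ≤ Pb x y) (hProw : ∀ x, ∑ y, Pb x y = 1)
    (hPdiag : ∀ x, Pb x x = 0) {α : ℝ} (hα : α ∈ Set.Icc (0:ℝ) 1) (x y : V) :
    IsCoupling (lazyDist Pb α x) (lazyDist Pb α y)
      fun a b => lazyDist Pb α x a * lazyDist Pb α y b :=
  .prod (lazyDist_nonneg hPnn hα x) (lazyDist_nonneg hPnn hα y)
    (sum_lazyDist hProw hPdiag α x) (sum_lazyDist hProw hPdiag α y)

end lazyDist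

theorem kappaAlpha_concave_general (d : V → V → ℝ)
    (hnn : ∀ x y, 0 ≤ d x y)
    (Pb : V → V → ℝ) (hPnn : ∀ x y, 0 ≤ Pb x y) (hProw : ∀ x, ∑ y, Pb x y = 1)
    (hPdiag : ∀ x, Pb x x = 0)
    (x y : V)
    (α₁ α₂ l : ℝ) (hα₁ : α₁ ∈ Set.Icc (0:ℝ) 1) (hα₂ : α₂ ∈ Set.Icc (0:ℝ) 1)
    (hl : l ∈ Set.Icc (0:ℝ) 1) :
    l * kappaAlpha d Pb α₁ x y + (1 - l) * kappaAlpha d Pb α₂ x y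
      ≤ kappaAlpha d Pb (l * α₁ + (1 - l) * α₂) x y := by
  have hW := W1_smul_add_smul_le hnn (isCoupling_lazyDist_prod hPnn hProw hPdiag hα₁ x y)
    (isCoupling_lazyDist_prod hPnn hProw hPdiag hα₂ x y) hl.1 (sub_nonneg.2 hl.2)
  rw [← lazyDist_convexComb, ← lazyDist_convexComb] at hW
  have hWd := div_le_div_of_nonneg_right hW (hnn x y)
  rw [add_div, mul_div_assoc, mul_div_assoc] at hWd
  unfold kappaAlpha
  linarith

/-- Concavity of the `α`-Ricci curvature in `α`. -/
theorem kappaAlpha_concave (d : V → V → ℝ)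
    (hnn : ∀ x y, 0 ≤ d x y)
    (htri : ∀ x y z, d x z ≤ d x y + d y z)
    (Pb : V → V → ℝ) (hPnn : ∀ x y, 0 ≤ Pb x y) (hProw : ∀ x, ∑ y, Pb x y = 1)
    (hPdiag : ∀ x, Pb x x = 0)
    (x y : V) (hxy : x ≠ y) (hd : 0 < d x y)
    (α₁ α₂ l : ℝ) (hα₁ : α₁ ∈ Set.Icc (0:ℝ) 1) (hα₂ : α₂ ∈ Set.Icc (0:ℝ) 1)
    (hl : l ∈ Set.Icc (0:ℝ) 1) :
    l * kappaAlpha d Pb α₁ x y + (1 - l) * kappaAlpha d Pb α₂ x y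
      ≤ kappaAlpha d Pb (l * α₁ + (1 - l) * α₂) x y :=
  kappaAlpha_concave_general d hnn Pb hPnn hProw hPdiag x y α₁ α₂ l hα₁ hα₂ hl
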